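/- arXiv:1702.06553 — 2 statements merged into one kernel-verified Lean document; each statement's English description precedes it below -/
import Mathlib

section
/- Let l be a nonzero homogeneous linear form in ℂ[X,Y,Z,W] such that the quadratic forms X·Y and Z·l have no common non-unit factor (equivalently, l is not a scalar multiple of X and not a scalar multiple of Y). Then there exists λ ∈ ℂ such that the polynomial X·Y + λ·Z·l is irreducible in ℂ[X,Y,Z,W]. -/
/-!
Write `l = aX + bY + cZ + dW` and expand `Q = XY + λ Z l` in `X`:
`Q = (Y + λaZ) X + λ Z (bY + cZ + dW)`. A polynomial of degree one in `X` is irreducible as soon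
as its two coefficients are coprime, and the leading coefficient `Y + λaZ` is prime. Substituting
`Y = -λaZ` shows that it divides the constant coefficient only if `λ = 0` or `d = 0`, `c = λab`.
Coprimality of `XY` and `Zl` excludes `c = d = ab = 0`, so some `λ` avoids these finitely many
bad values.
-/

open MvPolynomial

theorem Finsupp.exists_eq_single_of_degree_eq_one {σ : Type*} {m : σ →₀ ℕ} (hm : m.degree = 1) :
    ∃ i, m = Finsupp.single i 1 := by
  classical
  have hcard : Multiset.card (Finsupp.toMultiset m) = 1 := by
    rw [Finsupp.card_toMultiset, ← hm, Finsupp.degree_apply]; rfl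
  obtain ⟨i, hi⟩ := Multiset.card_eq_one.mp hcard
  exact ⟨i, by rw [← Finsupp.toMultiset_toFinsupp m, hi, Multiset.toFinsupp_singleton]⟩

theorem MvPolynomial.IsHomogeneous.eq_sum_C_mul_X {σ R : Type*} [Fintype σ] [CommSemiring R]
    {φ : MvPolynomial σ R} (hφ : φ.IsHomogeneous 1) :
    φ = ∑ i, C (coeff (Finsupp.single i 1) φ) * X i := by
  classical
  ext m
  simp only [coeff_sum, coeff_C_mul, coeff_X]
  by_cases hm : m.degree = 1
  · obtain ⟨i, rfl⟩ := Finsupp.exists_eq_single_of_degree_eq_one hm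
    simp [Finsupp.single_left_inj one_ne_zero]
  · rw [hφ.coeff_eq_zero hm, eq_comm]
    refine Finset.sum_eq_zero fun i _ => ?_
    rw [if_neg (by rintro rfl; exact hm (Finsupp.degree_single i 1)), mul_zero]

theorem MvPolynomial.prime_X_zero_add_C_mul_X_one {R : Type*} [CommRing R] [IsDomain R] {n : ℕ}
    (μ : R) : Prime (X 0 + C μ * X 1 : MvPolynomial (Fin (n + 2)) R) := by
  rw [← MulEquiv.prime_iff (finSuccEquiv R (n + 1)).toMulEquiv]
  have : finSuccEquiv R (n + 1) (X 0 + C μ * X (Fin.succ 0)) =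
      Polynomial.X - Polynomial.C (-(C μ * X 0)) := by
    rw [map_add, map_mul, finSuccEquiv_X_zero, finSuccEquiv_X_succ]
    simp [finSuccEquiv_apply]
  exact this ▸ Polynomial.prime_X_sub_C _

theorem MvPolynomial.C_mul_X_add_C_mul_X_ne_zero {σ R : Type*} [CommSemiring R] {i j : σ}
    (hij : i ≠ j) {p q : R} (h : p ≠ 0 ∨ q ≠ 0) : C p * X i + C q * X j ≠ 0 := by
  classical
  intro h0
  have hi := congrArg (coeff (Finsupp.single i 1)) h0
  have hj := congrArg (coeff (Finsupp.single j 1)) h0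
  simp [coeff_X, Finsupp.single_left_inj, hij, hij.symm] at hi hj
  exact h.elim (· hi) (· hj)

theorem MvPolynomial.irreducible_X_mul_X_add_C_mul_X_mul_linear {R : Type*} [CommRing R]
    [IsDomain R] {a b c d lam : R} (hlam : lam ≠ 0) (h : c - lam * a * b ≠ 0 ∨ d ≠ 0) :
    Irreducible (X 0 * X 1 + C lam * (X 2 * (C a * X 0 + C b * X 1 + C c * X 2 + C d * X 3)) :
      MvPolynomial (Fin 4) R) := by
  set A : MvPolynomial (Fin 3) R := X 0 + C (lam * a) * X 1
  set B : MvPolynomial (Fin 3) R := C lam * X 1 * (C b * X 0 + C c * X 1 + C d * X 2)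
  have hsplit : finSuccEquiv R 3
      (X 0 * X 1 + C lam * (X 2 * (C a * X 0 + C b * X 1 + C c * X 2 + C d * X 3))) =
        Polynomial.C A * Polynomial.X + Polynomial.C B := by
    rw [show (1 : Fin 4) = Fin.succ 0 from rfl, show (2 : Fin 4) = Fin.succ 1 from rfl,
      show (3 : Fin 4) = Fin.succ 2 from rfl]
    simp only [map_add, map_mul, finSuccEquiv_X_zero, finSuccEquiv_X_succ]
    simp only [finSuccEquiv_apply, eval₂Hom_C, RingHom.comp_apply, A, B, map_add, map_mul]
    ring
  rw [← MulEquiv.irreducible_iff (finSuccEquiv R 3), hsplit]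
  have hA : Prime A := prime_X_zero_add_C_mul_X_one _
  have hAB : ¬ A ∣ B := by
    set σ : Fin 3 → MvPolynomial (Fin 3) R := Function.update X 0 (-(C (lam * a) * X 1))
    have hσA : aeval σ A = 0 := by simp [A, σ]
    have hσB : aeval σ B = C lam * X 1 * (C (c - lam * a * b) * X 1 + C d * X 2) := by
      simp only [B, σ, map_add, map_mul, map_sub, aeval_X, aeval_C, algebraMap_eq,
        Function.update_self, Function.update_of_ne (show (1 : Fin 3) ≠ 0 by decide),
        Function.update_of_ne (show (2 : Fin 3) ≠ 0 by decide)]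
      ring
    intro hdvd
    have := map_dvd (aeval σ) hdvd
    rw [hσA, zero_dvd_iff, hσB] at this
    exact mul_ne_zero (mul_ne_zero (C_ne_zero.mpr hlam) (X_ne_zero _))
      (C_mul_X_add_C_mul_X_ne_zero (by decide) h) this
  apply Polynomial.irreducible_of_degree_eq_one_of_isRelPrime_coeff
    (Polynomial.degree_linear hA.ne_zero)
  simpa using (hA.irreducible.isRelPrime_iff_not_dvd.mpr hAB).symm

theorem MvPolynomial.ne_zero_or_ne_zero_or_mul_ne_zero_of_isRelPrime {R : Type*} [CommRing R]
    [IsDomain R] {a b c d : R}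
    (h : IsRelPrime (X 0 * X 1 : MvPolynomial (Fin 4) R)
      (X 2 * (C a * X 0 + C b * X 1 + C c * X 2 + C d * X 3))) :
    c ≠ 0 ∨ d ≠ 0 ∨ a * b ≠ 0 := by
  by_contra! hdeg
  obtain ⟨rfl, rfl, hab⟩ := hdeg
  rcases mul_eq_zero.mp hab with rfl | rfl
  · exact X_prime.not_isUnit (h (dvd_mul_left _ _) ⟨X 2 * C b, by rw [C_0]; ring⟩)
  · exact X_prime.not_isUnit (h (dvd_mul_right _ _) ⟨X 2 * C a, by rw [C_0]; ring⟩)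

theorem exists_ne_zero_and_sub_mul_ne_zero_or {K : Type*} [Field K] [Infinite K] {a b c d : K}
    (h : c ≠ 0 ∨ d ≠ 0 ∨ a * b ≠ 0) : ∃ lam : K, lam ≠ 0 ∧ (c - lam * a * b ≠ 0 ∨ d ≠ 0) := by
  classical
  obtain ⟨lam, hlam⟩ := Infinite.exists_notMem_finset ({0, c / (a * b)} : Finset K)
  simp only [Finset.mem_insert, Finset.mem_singleton, not_or] at hlam
  refine ⟨lam, hlam.1, ?_⟩
  by_contra! hbad
  obtain ⟨hc, rfl⟩ := hbad
  rcases eq_or_ne (a * b) 0 with hab | hab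
  · rw [mul_assoc, hab, mul_zero, sub_zero] at hc
    simp [hc, hab] at h
  · exact hlam.2 (by rw [eq_div_iff hab, ← mul_assoc, eq_comm, ← sub_eq_zero, hc])

theorem stmt4_general (l : MvPolynomial (Fin 4) ℂ) (hlin : l.IsHomogeneous 1)
    (hcop : ∀ r : MvPolynomial (Fin 4) ℂ, r ∣ X 0 * X 1 → r ∣ X 2 * l → IsUnit r) :
    ∃ lam : ℂ, Irreducible (X 0 * X 1 + C lam * (X 2 * l)) := by
  obtain ⟨a, b, c, d, rfl⟩ : ∃ a b c d : ℂ, l = C a * X 0 + C b * X 1 + C c * X 2 + C d * X 3 :=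
    ⟨_, _, _, _, by simpa [Fin.sum_univ_four] using hlin.eq_sum_C_mul_X⟩
  obtain ⟨lam, hlam, hgood⟩ := exists_ne_zero_and_sub_mul_ne_zero_or
    (ne_zero_or_ne_zero_or_mul_ne_zero_of_isRelPrime fun r => hcop r)
  exact ⟨lam, irreducible_X_mul_X_add_C_mul_X_mul_linear hlam hgood⟩

/-- If `l` is a nonzero linear form in `ℂ[X,Y,Z,W]` such that `X·Y` and `Z·l` have no
common non-unit factor, then there exists `λ ∈ ℂ` with `X·Y + λ·Z·l` irreducible. -/
theorem stmt4 (l : MvPolynomial (Fin 4) ℂ) (hl : l ≠ 0) (hlin : l.IsHomogeneous 1)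
    (hcop : ∀ r : MvPolynomial (Fin 4) ℂ, r ∣ X 0 * X 1 → r ∣ X 2 * l → IsUnit r) :
    ∃ lam : ℂ, Irreducible (X 0 * X 1 + C lam * (X 2 * l)) :=
  stmt4_general l hlin hcop
end

section
/- Let q₁ and q₂ be homogeneous polynomials of degree 2 in the polynomial ring ℂ[u,v] in two variables which have no common non-unit factor. Then there exist homogeneous polynomials u', v' of degree 1 in ℂ[u,v], linearly independent over ℂ, such that the ideal generated by q₁ and q₂ equals the ideal generated by u'·v' and (u' + v')². -/
/-!
A member `s q₁ + t q₂` of the pencil is the square of a linear form exactly when its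
discriminant vanishes. That discriminant is a binary quadratic form in `(s, t)` whose own
discriminant is `16` times the resultant of `q₁, q₂`, i.e. the product of the four determinants
pairing a linear factor of `q₁` with one of `q₂`. Coprimality makes all of them nonzero, so over
an algebraically closed field the pencil contains squares `ℓ₁², ℓ₂²` at independent parameters,
and these span it. With `ℓ₁ = u' + v'`, `ℓ₂ = u' - v'` one has `4 u'v' = ℓ₁² - ℓ₂²`, so `u'v'` and
`(u' + v')²` span the same pencil, hence generate the same ideal; that ideal equality carries the
coprimality of `q₁, q₂` over to the linear forms `u', v'`, which are therefore independent.
-/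

open MvPolynomial

theorem IsRelPrime.of_span_pair_le {R : Type*} [CommSemiring R] {a b c d : R}
    (h : Ideal.span {a, b} ≤ Ideal.span {c, d}) (hab : IsRelPrime a b) : IsRelPrime c d := by
  intro z hc hd
  have hz : Ideal.span {c, d} ≤ Ideal.span {z} := by
    rw [Ideal.span_le, Set.insert_subset_iff, Set.singleton_subset_iff]
    exact ⟨Ideal.mem_span_singleton.mpr hc, Ideal.mem_span_singleton.mpr hd⟩
  exact hab (Ideal.mem_span_singleton.mp (hz (h (Ideal.subset_span (by simp)))))
    (Ideal.mem_span_singleton.mp (hz (h (Ideal.subset_span (by simp)))))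

theorem Ideal.span_eq_span_of_submodule_span_eq {K R : Type*} [CommSemiring K] [CommSemiring R]
    [Algebra K R] {s t : Set R} (h : Submodule.span K s = Submodule.span K t) :
    Ideal.span s = Ideal.span t := by
  rw [Ideal.span, ← Submodule.span_span_of_tower K, h, Submodule.span_span_of_tower]

theorem linearIndependent_pair_of_isRelPrime {K R : Type*} [Field K] [CommRing R]
    [Algebra K R] {x y : R} (hx : ¬IsUnit x) (hy : ¬IsUnit y) (h : IsRelPrime x y) :
    LinearIndependent K ![x, y] := by
  rw [LinearIndependent.pair_iff]
  intro s t hst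
  by_cases hs : s = 0
  · subst hs
    refine ⟨rfl, by_contra fun ht => hx (h dvd_rfl ⟨0, ?_⟩)⟩
    simpa [ht] using hst
  · refine absurd (h ⟨algebraMap K R (-t / s), ?_⟩ dvd_rfl) hy
    rw [← Algebra.commutes, ← Algebra.smul_def]
    linear_combination (norm := module) s⁻¹ • hst - (inv_mul_cancel₀ hs) • x

theorem Submodule.span_pair_eq_of_det_ne_zero {K M : Type*} [Field K] [AddCommGroup M]
    [Module K M] {x y : M} {s₁ t₁ s₂ t₂ : K} (h : s₁ * t₂ - s₂ * t₁ ≠ 0) :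
    span K {s₁ • x + t₁ • y, s₂ • x + t₂ • y} = span K {x, y} := by
  apply le_antisymm <;> rw [span_le, Set.insert_subset_iff, Set.singleton_subset_iff]
  · exact ⟨mem_span_pair.mpr ⟨s₁, t₁, rfl⟩, mem_span_pair.mpr ⟨s₂, t₂, rfl⟩⟩
  · constructor
    · refine mem_span_pair.mpr ⟨t₂ / (s₁ * t₂ - s₂ * t₁), -t₁ / (s₁ * t₂ - s₂ * t₁), ?_⟩
      linear_combination (norm := module) (div_self h) • x
    · refine mem_span_pair.mpr ⟨-s₂ / (s₁ * t₂ - s₂ * t₁), s₁ / (s₁ * t₂ - s₂ * t₁), ?_⟩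
      linear_combination (norm := module) (div_self h) • y

theorem Submodule.span_mul_add_sq_eq_span_add_sq_sub_sq {K R : Type*} [Field K] [NeZero (2 : K)]
    [CommRing R] [Algebra K R] (u v : R) :
    span K {u * v, (u + v) ^ 2} = span K {(u + v) ^ 2, (u - v) ^ 2} := by
  have h4 : (4 : K) ≠ 0 := by
    rw [show (4 : K) = 2 ^ 2 by norm_num]; exact pow_ne_zero 2 two_ne_zero
  have huv : u * v = (4⁻¹ : K) • (u + v) ^ 2 + (-4⁻¹ : K) • (u - v) ^ 2 := by
    have h : (4 : K) • (u * v) = (u + v) ^ 2 - (u - v) ^ 2 := by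
      rw [Algebra.smul_def, map_ofNat]; ring
    linear_combination (norm := module) (4⁻¹ : K) • h - (inv_mul_cancel₀ h4) • (u * v)
  have := span_pair_eq_of_det_ne_zero (x := (u + v) ^ 2) (y := (u - v) ^ 2)
    (s₁ := (4⁻¹ : K)) (t₁ := -4⁻¹) (s₂ := 1) (t₂ := 0) (by simpa using h4)
  rwa [one_smul, zero_smul, add_zero, ← huv] at this

theorem MvPolynomial.IsHomogeneous.not_isUnit {R σ : Type*} [CommSemiring R] [Nontrivial R]
    {φ : MvPolynomial σ R} {n : ℕ} (hφ : φ.IsHomogeneous n) (hn : n ≠ 0) : ¬IsUnit φ := by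
  intro hu
  have h0 : constantCoeff φ = 0 := hφ.coeff_eq_zero (by simpa using hn.symm)
  exact not_isUnit_zero (h0 ▸ hu.map constantCoeff)

section BinaryForms

variable {K : Type*} [Field K]

noncomputable def linForm (p q : K) : MvPolynomial (Fin 2) K := C p * X 0 + C q * X 1

noncomputable def quadForm (a b c : K) : MvPolynomial (Fin 2) K :=
  C a * X 0 ^ 2 + C b * (X 0 * X 1) + C c * X 1 ^ 2

theorem isHomogeneous_linForm (p q : K) : (linForm p q).IsHomogeneous 1 :=
  (isHomogeneous_C_mul_X p 0).add (isHomogeneous_C_mul_X q 1)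

theorem isHomogeneous_quadForm (a b c : K) : (quadForm a b c).IsHomogeneous 2 :=
  ((isHomogeneous_C_mul_X_pow a 0 2).add
    (((isHomogeneous_X K 0).mul (isHomogeneous_X K 1)).C_mul b)).add
    (isHomogeneous_C_mul_X_pow c 1 2)

theorem exists_eq_quadForm {f : MvPolynomial (Fin 2) K} (hf : f.IsHomogeneous 2) :
    ∃ a b c, f = quadForm a b c := by
  refine ⟨coeff (Finsupp.single 0 2) f, coeff (Finsupp.single 0 1 + Finsupp.single 1 1) f,
    coeff (Finsupp.single 1 2) f, ?_⟩
  ext m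
  obtain ⟨i, j, rfl⟩ : ∃ i j, m = Finsupp.single 0 i + Finsupp.single 1 j :=
    ⟨m 0, m 1, by ext k; fin_cases k <;> simp⟩
  by_cases hij : i + j = 2
  · obtain ⟨rfl, rfl⟩ | ⟨rfl, rfl⟩ | ⟨rfl, rfl⟩ :
        i = 2 ∧ j = 0 ∨ i = 1 ∧ j = 1 ∨ i = 0 ∧ j = 2 := by omega
    all_goals simp [quadForm, X, monomial_pow, monomial_mul, coeff_monomial, Finsupp.ext_iff,
      Fin.forall_fin_two]
  · have hdeg : (Finsupp.single 0 i + Finsupp.single (1 : Fin 2) j).degree ≠ 2 := by simpa using hij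
    rw [hf.coeff_eq_zero hdeg, (isHomogeneous_quadForm _ _ _).coeff_eq_zero hdeg]

theorem linForm_mul_linForm (p q p' q' : K) :
    linForm p q * linForm p' q' = quadForm (p * p') (p * q' + p' * q) (q * q') := by
  simp only [linForm, quadForm, map_mul, map_add]; ring

theorem linForm_sq (p q : K) : linForm p q ^ 2 = quadForm (p ^ 2) (2 * p * q) (q ^ 2) := by
  simp only [linForm, quadForm, map_mul, map_pow, map_ofNat]; ring

theorem smul_quadForm_add_smul_quadForm (s t a₁ b₁ c₁ a₂ b₂ c₂ : K) :
    s • quadForm a₁ b₁ c₁ + t • quadForm a₂ b₂ c₂ =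
      quadForm (s * a₁ + t * a₂) (s * b₁ + t * b₂) (s * c₁ + t * c₂) := by
  simp only [quadForm, smul_eq_C_mul, map_mul, map_add]; ring

theorem det_ne_zero_of_linearIndependent {a b c d : K}
    (h : LinearIndependent K ![linForm a b, linForm c d]) : a * d - b * c ≠ 0 := by
  intro hdet
  rw [LinearIndependent.pair_iff] at h
  have hdet' : C (a * d - b * c) = (0 : MvPolynomial (Fin 2) K) := by rw [hdet, map_zero]
  simp only [map_sub, map_mul] at hdet'
  obtain ⟨-, hb⟩ := h d (-b) (by
    simp only [linForm, smul_eq_C_mul, map_neg]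
    linear_combination X 0 * hdet')
  obtain ⟨-, ha⟩ := h c (-a) (by
    simp only [linForm, smul_eq_C_mul, map_neg]
    linear_combination -X 1 * hdet')
  obtain rfl : a = 0 := neg_eq_zero.mp ha
  obtain rfl : b = 0 := neg_eq_zero.mp hb
  simpa [linForm] using h 1 0

theorem det_ne_zero_of_isRelPrime {a b c d : K} (h : IsRelPrime (linForm a b) (linForm c d)) :
    a * d - b * c ≠ 0 :=
  det_ne_zero_of_linearIndependent <| linearIndependent_pair_of_isRelPrime
    ((isHomogeneous_linForm a b).not_isUnit one_ne_zero)
    ((isHomogeneous_linForm c d).not_isUnit one_ne_zero) h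

variable [IsAlgClosed K] [NeZero (2 : K)]

theorem exists_quadratic_factorization (a b c : K) :
    ∃ p₁ q₁ p₂ q₂ : K, a = p₁ * p₂ ∧ b = p₁ * q₂ + p₂ * q₁ ∧ c = q₁ * q₂ := by
  by_cases ha : a = 0
  · exact ⟨0, 1, b, c, by rw [ha]; ring, by ring, by ring⟩
  · obtain ⟨d, hd⟩ := IsAlgClosed.exists_eq_mul_self (discrim a b c)
    refine ⟨a, (b + d) / 2, 1, (b - d) / (2 * a), by ring, by field_simp; ring, ?_⟩
    field_simp
    rw [discrim] at hd
    linear_combination -hd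

theorem exists_quadForm_eq_linForm_sq {a b c : K} (h : discrim a b c = 0) :
    ∃ p q : K, quadForm a b c = linForm p q ^ 2 := by
  obtain ⟨p, hp⟩ := IsAlgClosed.exists_pow_nat_eq a two_pos
  by_cases hp0 : p = 0
  · have hb : b = 0 := by
      subst hp0
      simpa [discrim, ← hp] using h
    obtain ⟨q, hq⟩ := IsAlgClosed.exists_pow_nat_eq c two_pos
    refine ⟨0, q, ?_⟩
    rw [linForm_sq, hq, hb, ← hp, hp0]
    ring_nf
  · refine ⟨p, b / (2 * p), ?_⟩
    rw [linForm_sq]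
    congr 1
    · exact hp.symm
    · field_simp
    · field_simp
      rw [discrim] at h
      linear_combination 4 * c * hp - h

theorem discrim_discrim_ne_zero_of_isRelPrime {a₁ b₁ c₁ a₂ b₂ c₂ : K}
    (h : IsRelPrime (quadForm a₁ b₁ c₁) (quadForm a₂ b₂ c₂)) :
    discrim (discrim a₁ b₁ c₁) (2 * b₁ * b₂ - 4 * a₁ * c₂ - 4 * a₂ * c₁) (discrim a₂ b₂ c₂) ≠
      0 := by
  obtain ⟨p₁, q₁, p₂, q₂, rfl, rfl, rfl⟩ := exists_quadratic_factorization a₁ b₁ c₁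
  obtain ⟨p₃, q₃, p₄, q₄, rfl, rfl, rfl⟩ := exists_quadratic_factorization a₂ b₂ c₂
  rw [← linForm_mul_linForm, ← linForm_mul_linForm] at h
  have h₁₃ := det_ne_zero_of_isRelPrime h.of_mul_left_left.of_mul_right_left
  have h₁₄ := det_ne_zero_of_isRelPrime h.of_mul_left_left.of_mul_right_right
  have h₂₃ := det_ne_zero_of_isRelPrime h.of_mul_left_right.of_mul_right_left
  have h₂₄ := det_ne_zero_of_isRelPrime h.of_mul_left_right.of_mul_right_right
  have hres : discrim (discrim (p₁ * p₂) (p₁ * q₂ + p₂ * q₁) (q₁ * q₂))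
      (2 * (p₁ * q₂ + p₂ * q₁) * (p₃ * q₄ + p₄ * q₃) - 4 * (p₁ * p₂) * (q₃ * q₄) -
        4 * (p₃ * p₄) * (q₁ * q₂))
      (discrim (p₃ * p₄) (p₃ * q₄ + p₄ * q₃) (q₃ * q₄)) =
      2 ^ 4 * ((p₁ * q₃ - q₁ * p₃) * (p₁ * q₄ - q₁ * p₄) * (p₂ * q₃ - q₂ * p₃) *
        (p₂ * q₄ - q₂ * p₄)) := by
    simp only [discrim]; ring
  rw [hres]
  exact mul_ne_zero (pow_ne_zero 4 two_ne_zero)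
    (mul_ne_zero (mul_ne_zero (mul_ne_zero h₁₃ h₁₄) h₂₃) h₂₄)

theorem exists_span_quadForm_eq_span_sq {a₁ b₁ c₁ a₂ b₂ c₂ : K}
    (h : IsRelPrime (quadForm a₁ b₁ c₁) (quadForm a₂ b₂ c₂)) :
    ∃ ℓ₁ ℓ₂ : MvPolynomial (Fin 2) K, ℓ₁.IsHomogeneous 1 ∧ ℓ₂.IsHomogeneous 1 ∧
      Submodule.span K {quadForm a₁ b₁ c₁, quadForm a₂ b₂ c₂} =
        Submodule.span K {ℓ₁ ^ 2, ℓ₂ ^ 2} := by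
  obtain ⟨p₁, r₁, p₂, r₂, hA, hB, hC⟩ := exists_quadratic_factorization
    (discrim a₁ b₁ c₁) (2 * b₁ * b₂ - 4 * a₁ * c₂ - 4 * a₂ * c₁) (discrim a₂ b₂ c₂)
  have hdet : r₁ * -p₂ - r₂ * -p₁ ≠ 0 := by
    intro h0
    apply discrim_discrim_ne_zero_of_isRelPrime h
    rw [hA, hB, hC, discrim]
    linear_combination (p₁ * r₂ - p₂ * r₁) * h0
  have hsq : ∀ s t : K, (p₁ * s + r₁ * t) * (p₂ * s + r₂ * t) = 0 →
      ∃ ℓ : MvPolynomial (Fin 2) K, ℓ.IsHomogeneous 1 ∧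
        s • quadForm a₁ b₁ c₁ + t • quadForm a₂ b₂ c₂ = ℓ ^ 2 := by
    intro s t hst
    rw [smul_quadForm_add_smul_quadForm]
    have hdisc : discrim (s * a₁ + t * a₂) (s * b₁ + t * b₂) (s * c₁ + t * c₂) = 0 := by
      simp only [discrim] at hA hB hC ⊢
      linear_combination s ^ 2 * hA + s * t * hB + t ^ 2 * hC + hst
    obtain ⟨p, q, hpq⟩ := exists_quadForm_eq_linForm_sq hdisc
    exact ⟨_, isHomogeneous_linForm p q, hpq⟩
  obtain ⟨ℓ₁, hℓ₁, h₁⟩ := hsq r₁ (-p₁) (by ring)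
  obtain ⟨ℓ₂, hℓ₂, h₂⟩ := hsq r₂ (-p₂) (by ring)
  exact ⟨ℓ₁, ℓ₂, hℓ₁, hℓ₂, by rw [← h₁, ← h₂, Submodule.span_pair_eq_of_det_ne_zero hdet]⟩

end BinaryForms

/-- Any two coprime binary quadratic forms `q₁, q₂ ∈ ℂ[u,v]` generate the same ideal as
`u'·v'` and `(u' + v')²` for some linearly independent linear forms `u', v'`. -/
theorem stmt6 (q₁ q₂ : MvPolynomial (Fin 2) ℂ)
    (h₁ : q₁.IsHomogeneous 2) (h₂ : q₂.IsHomogeneous 2)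
    (hcop : ∀ r : MvPolynomial (Fin 2) ℂ, r ∣ q₁ → r ∣ q₂ → IsUnit r) :
    ∃ u' v' : MvPolynomial (Fin 2) ℂ, u'.IsHomogeneous 1 ∧ v'.IsHomogeneous 1 ∧
      LinearIndependent ℂ ![u', v'] ∧
      Ideal.span ({q₁, q₂} : Set (MvPolynomial (Fin 2) ℂ)) =
        Ideal.span ({u' * v', (u' + v') ^ 2} : Set (MvPolynomial (Fin 2) ℂ)) := by
  obtain ⟨a₁, b₁, c₁, rfl⟩ := exists_eq_quadForm h₁
  obtain ⟨a₂, b₂, c₂, rfl⟩ := exists_eq_quadForm h₂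
  obtain ⟨ℓ₁, ℓ₂, hℓ₁, hℓ₂, hspan⟩ := exists_span_quadForm_eq_span_sq hcop
  set u' := (2⁻¹ : ℂ) • (ℓ₁ + ℓ₂)
  set v' := (2⁻¹ : ℂ) • (ℓ₁ - ℓ₂)
  have hu' : u'.IsHomogeneous 1 :=
    Submodule.smul_mem (homogeneousSubmodule _ ℂ 1) _ (add_mem hℓ₁ hℓ₂)
  have hv' : v'.IsHomogeneous 1 :=
    Submodule.smul_mem (homogeneousSubmodule _ ℂ 1) _ (sub_mem hℓ₁ hℓ₂)
  have hideal : Ideal.span {quadForm a₁ b₁ c₁, quadForm a₂ b₂ c₂} =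
      Ideal.span {u' * v', (u' + v') ^ 2} := by
    refine Ideal.span_eq_span_of_submodule_span_eq (K := ℂ) ?_
    rw [hspan, Submodule.span_mul_add_sq_eq_span_add_sq_sub_sq,
      show u' + v' = ℓ₁ by module, show u' - v' = ℓ₂ by module]
  have hrel : IsRelPrime (u' * v') ((u' + v') ^ 2) := IsRelPrime.of_span_pair_le hideal.le hcop
  refine ⟨u', v', hu', hv', linearIndependent_pair_of_isRelPrime
    (hu'.not_isUnit one_ne_zero) (hv'.not_isUnit one_ne_zero) ?_, hideal⟩
  exact fun z hu hv => hrel (dvd_mul_of_dvd_left hu _) (dvd_pow (dvd_add hu hv) two_ne_zero)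
end
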